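/- Liouville-type Theorem for v-slice regular functions: If f ∈ 𝒮ℛ_v(ℍ) and there exists M > 0 such that ‖f(q)‖ ≤ M e^{-⟨q,v⟩} for all q ∈ ℍ, then there exists a constant k ∈ ℍ such that f(q) = e^{-⟨q,v⟩} k for all q ∈ ℍ. -/

import Mathlib

/-!
The weight `e^{⟨q,v⟩}` absorbs the zeroth-order term of the `v`-slice Cauchy–Riemann operator, so
`g q = e^{⟨q,v⟩} f q` is slice regular, and it is bounded by `M`. A bounded entire slice regular
function is constant: on a slice `ℂ(i)`, composing `g` with the real-linear coordinate
`u ↦ ⟪w, u⟫ - ⟪w, i u⟫ I`, which turns left multiplication by `i` into multiplication by `I`,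
gives a bounded entire holomorphic function, constant by Liouville's theorem; the real parts
`⟪w, g q⟫`, `w ∈ ℍ`, determine `g q`. Hence `f q = e^{-⟨q,v⟩} g 0`.
-/

open Quaternion

noncomputable section

/-- Real Euclidean inner product on the quaternions (sum of products of components). -/
def qinner (q v : ℍ[ℝ]) : ℝ :=
  q.re * v.re + q.imI * v.imI + q.imJ * v.imJ + q.imK * v.imK

/-- The sphere of purely imaginary unit quaternions. -/
def Sph2 : Set ℍ[ℝ] := {i | i.re = 0 ∧ ‖i‖ = 1}

/-- The complex slice plane `ℂ(i) = {x + y i : x, y ∈ ℝ}`. -/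
def slicePlane (i : ℍ[ℝ]) : Set ℍ[ℝ] := {z | ∃ x y : ℝ, z = (x : ℍ[ℝ]) + y • i}

/-- The slice Cauchy–Riemann operator `∂/∂ z̄_i = (1/2)(∂/∂x + i ∂/∂y)`. -/
def dbar (i : ℍ[ℝ]) (f : ℍ[ℝ] → ℍ[ℝ]) (q : ℍ[ℝ]) : ℍ[ℝ] :=
  (1 / 2 : ℝ) • (fderiv ℝ f q 1 + i * fderiv ℝ f q i)

/-- Slice regular functions on `Ω`. -/
def SliceRegularOn (f : ℍ[ℝ] → ℍ[ℝ]) (Ω : Set ℍ[ℝ]) : Prop :=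
  ContDiffOn ℝ 1 f Ω ∧ ∀ i ∈ Sph2, ∀ q ∈ Ω ∩ slicePlane i, dbar i f q = 0

/-- `v`-slice regular functions on `Ω`. -/
def VSliceRegularOn (v : ℍ[ℝ]) (f : ℍ[ℝ] → ℍ[ℝ]) (Ω : Set ℍ[ℝ]) : Prop :=
  ContDiffOn ℝ 1 f Ω ∧ ∀ i ∈ Sph2, ∀ q ∈ Ω ∩ slicePlane i,
    dbar i f q + (1 / 4 : ℝ) • ((v - i * v * i) * f q) = 0

/-- Axially symmetric slice domain. -/
def AxSymSliceDomain (Ω : Set ℍ[ℝ]) : Prop :=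
  IsOpen Ω ∧ IsConnected Ω ∧ (∃ r : ℝ, (r : ℍ[ℝ]) ∈ Ω) ∧
  (∀ i ∈ Sph2, IsConnected (Ω ∩ slicePlane i)) ∧
  (∀ (x y : ℝ), ∀ i ∈ Sph2, (x : ℍ[ℝ]) + y • i ∈ Ω → ∀ j ∈ Sph2, (x : ℍ[ℝ]) + y • j ∈ Ω)

open Set Bornology

theorem qinner_eq_inner (q v : ℍ[ℝ]) : qinner q v = inner ℝ q v := by
  simp [qinner, Quaternion.inner_def]

theorem mul_self_of_mem_Sph2 {i : ℍ[ℝ]} (hi : i ∈ Sph2) : i * i = -1 := by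
  have h := Quaternion.self_mul_star (a := i)
  rw [Quaternion.star_eq_neg.2 hi.1, Quaternion.normSq_eq_norm_mul_self, hi.2] at h
  simpa using congrArg Neg.neg h

theorem sub_mul_mul_of_mem_Sph2 {i : ℍ[ℝ]} (hi : i ∈ Sph2) (v : ℍ[ℝ]) :
    v - i * v * i = (2 : ℝ) • ((v.re : ℍ[ℝ]) + qinner i v • i) := by
  have h : i.imI ^ 2 + i.imJ ^ 2 + i.imK ^ 2 = 1 := by
    have h1 := Quaternion.normSq_eq_norm_mul_self i
    rw [hi.2, Quaternion.normSq_def', hi.1] at h1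
    linarith
  ext <;> simp [qinner, hi.1]
  · linear_combination v.re * h
  · linear_combination (-v.imI) * h
  · linear_combination (-v.imJ) * h
  · linear_combination (-v.imK) * h

theorem fderiv_apply_eq_mul_of_dbar_eq_zero {g : ℍ[ℝ] → ℍ[ℝ]} {i q : ℍ[ℝ]} (hi : i ∈ Sph2)
    (h : dbar i g q = 0) : fderiv ℝ g q i = i * fderiv ℝ g q 1 := by
  have h' : fderiv ℝ g q 1 + i * fderiv ℝ g q i = 0 :=
    (smul_eq_zero.1 h).resolve_left (by norm_num)
  have := congrArg (i * ·) h'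
  simp only [mul_add, ← mul_assoc, mul_self_of_mem_Sph2 hi, neg_one_mul, mul_zero] at this
  linear_combination (norm := skip) -this
  noncomm_ring

def sliceEmb (i : ℍ[ℝ]) : ℂ →L[ℝ] ℍ[ℝ] :=
  Complex.reCLM.smulRight 1 + Complex.imCLM.smulRight i

theorem sliceEmb_apply (i : ℍ[ℝ]) (z : ℂ) : sliceEmb i z = (z.re : ℍ[ℝ]) + z.im • i := by
  simp [sliceEmb, Algebra.smul_def]

@[simp] theorem sliceEmb_one (i : ℍ[ℝ]) : sliceEmb i 1 = 1 := by simp [sliceEmb_apply]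

@[simp] theorem sliceEmb_I (i : ℍ[ℝ]) : sliceEmb i Complex.I = i := by simp [sliceEmb_apply]

theorem sliceEmb_mem_slicePlane (i : ℍ[ℝ]) (z : ℂ) : sliceEmb i z ∈ slicePlane i :=
  ⟨z.re, z.im, sliceEmb_apply i z⟩

theorem exists_mem_Sph2_sliceEmb_eq (q : ℍ[ℝ]) : ∃ i ∈ Sph2, ∃ z : ℂ, sliceEmb i z = q := by
  by_cases hq : q.im = 0
  · refine ⟨(Complex.I : ℍ[ℝ]), ⟨by simp, ?_⟩, q.re, ?_⟩
    · rw [norm_eq_sqrt_real_inner, Quaternion.inner_self, Quaternion.normSq_def']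
      simp
    · conv_rhs => rw [← q.re_add_im, hq]
      simp [sliceEmb_apply]
  · have hn : ‖q.im‖ ≠ 0 := norm_ne_zero_iff.2 hq
    refine ⟨‖q.im‖⁻¹ • q.im, ⟨by simp, by simp [norm_smul, hn]⟩, ⟨q.re, ‖q.im‖⟩, ?_⟩
    conv_rhs => rw [← q.re_add_im]
    simp [sliceEmb_apply, smul_smul, hn]

def sliceCoord (i w : ℍ[ℝ]) : ℍ[ℝ] →L[ℝ] ℂ :=
  (innerSL ℝ w).smulRight 1 -
    ((innerSL ℝ w).comp (ContinuousLinearMap.mul ℝ ℍ[ℝ] i)).smulRight Complex.I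

@[simp] theorem sliceCoord_re (i w u : ℍ[ℝ]) : (sliceCoord i w u).re = inner ℝ w u := by
  simp [sliceCoord]

theorem sliceCoord_mul_left {i : ℍ[ℝ]} (hi : i ∈ Sph2) (w u : ℍ[ℝ]) :
    sliceCoord i w (i * u) = Complex.I * sliceCoord i w u := by
  have hii : i * (i * u) = -u := by rw [← mul_assoc, mul_self_of_mem_Sph2 hi, neg_one_mul]
  apply Complex.ext <;> simp [sliceCoord, hii]

theorem differentiable_sliceCoord_comp {g : ℍ[ℝ] → ℍ[ℝ]} {i : ℍ[ℝ]} (hi : i ∈ Sph2)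
    (hg : Differentiable ℝ g) (hcr : ∀ q ∈ slicePlane i, dbar i g q = 0) (w : ℍ[ℝ]) :
    Differentiable ℂ fun z => sliceCoord i w (g (sliceEmb i z)) := by
  intro z
  set L := (sliceCoord i w).comp ((fderiv ℝ g (sliceEmb i z)).comp (sliceEmb i))
  have hL : HasFDerivAt (fun z => sliceCoord i w (g (sliceEmb i z))) L z :=
    (sliceCoord i w).hasFDerivAt.comp z
      ((hg _).hasFDerivAt.comp z (sliceEmb i).hasFDerivAt)
  have hLI : L Complex.I = Complex.I • L 1 := by
    have := fderiv_apply_eq_mul_of_dbar_eq_zero hi (hcr _ (sliceEmb_mem_slicePlane i z))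
    simp only [L, ContinuousLinearMap.comp_apply, sliceEmb_I, sliceEmb_one, this,
      sliceCoord_mul_left hi, smul_eq_mul]
  exact (hL.complexOfReal_hasFDerivAt hLI).differentiableAt

theorem SliceRegularOn.apply_eq_apply_of_isBounded {g : ℍ[ℝ] → ℍ[ℝ]}
    (hg : SliceRegularOn g univ) (hb : IsBounded (range g)) (p q : ℍ[ℝ]) : g p = g q := by
  have hd : Differentiable ℝ g := (contDiffOn_univ.1 hg.1).differentiable one_ne_zero
  suffices h : ∀ q, g q = g 0 by rw [h p, h q]
  intro q
  obtain ⟨i, hi, z, rfl⟩ := exists_mem_Sph2_sliceEmb_eq q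
  refine ext_inner_left ℝ fun w => ?_
  have hF := differentiable_sliceCoord_comp hi hd (fun q hq => hg.2 i hi q ⟨trivial, hq⟩) w
  have hFb : IsBounded (range fun z => sliceCoord i w (g (sliceEmb i z))) :=
    ((sliceCoord i w).lipschitz.isBounded_image hb).subset <| by
      rintro _ ⟨z, rfl⟩
      exact mem_image_of_mem _ (mem_range_self _)
  simpa using congrArg Complex.re (hF.apply_eq_apply_of_bounded hFb z 0)

theorem hasFDerivAt_exp_qinner (v q : ℍ[ℝ]) :
    HasFDerivAt (fun q => Real.exp (qinner q v)) (Real.exp (qinner q v) • innerSL ℝ v) q := by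
  have h (q : ℍ[ℝ]) : qinner q v = innerSL ℝ v q := by
    rw [qinner_eq_inner, innerSL_apply_apply, real_inner_comm]
  simp only [h]
  exact (innerSL ℝ v).hasFDerivAt.exp

theorem dbar_exp_smul {v : ℍ[ℝ]} {f : ℍ[ℝ] → ℍ[ℝ]} {i q : ℍ[ℝ]} (hi : i ∈ Sph2)
    (hf : DifferentiableAt ℝ f q) :
    dbar i (fun q => Real.exp (qinner q v) • f q) q
      = Real.exp (qinner q v) • (dbar i f q + (1 / 4 : ℝ) • ((v - i * v * i) * f q)) := by
  have hD (u : ℍ[ℝ]) : fderiv ℝ (fun q => Real.exp (qinner q v) • f q) q u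
      = Real.exp (qinner q v) • fderiv ℝ f q u + (Real.exp (qinner q v) * qinner u v) • f q := by
    have hfd : HasFDerivAt (fun q => Real.exp (qinner q v) • f q) _ q :=
      (hasFDerivAt_exp_qinner v q).smul hf.hasFDerivAt
    rw [hfd.fderiv]
    simp [qinner_eq_inner, real_inner_comm v]
  have h1 : qinner 1 v = v.re := by simp [qinner]
  simp only [dbar, hD, h1, sub_mul_mul_of_mem_Sph2 hi, mul_add, add_mul, mul_smul_comm,
    smul_mul_assoc, Quaternion.coe_mul_eq_smul]
  module

theorem VSliceRegularOn.sliceRegularOn_exp_smul {v : ℍ[ℝ]} {f : ℍ[ℝ] → ℍ[ℝ]} {Ω : Set ℍ[ℝ]}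
    (hΩ : IsOpen Ω) (hf : VSliceRegularOn v f Ω) :
    SliceRegularOn (fun q => Real.exp (qinner q v) • f q) Ω := by
  refine ⟨?_, fun i hi q hq => ?_⟩
  · have he : ContDiff ℝ 1 fun q => Real.exp (qinner q v) := by
      simp only [qinner_eq_inner]
      exact (contDiff_id.inner ℝ contDiff_const).exp
    exact he.contDiffOn.smul hf.1
  · rw [dbar_exp_smul hi ((hf.1.differentiableOn one_ne_zero).differentiableAt (hΩ.mem_nhds hq.1)),
      hf.2 i hi q hq, smul_zero]

theorem stmt13_general (v : ℍ[ℝ]) (f : ℍ[ℝ] → ℍ[ℝ])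
    (hf : VSliceRegularOn v f Set.univ)
    (M : ℝ)
    (hb : ∀ q : ℍ[ℝ], ‖f q‖ ≤ M * Real.exp (-(qinner q v))) :
    ∃ k : ℍ[ℝ], ∀ q : ℍ[ℝ], f q = Real.exp (-(qinner q v)) • k := by
  set g := fun q => Real.exp (qinner q v) • f q
  have hg : SliceRegularOn g univ := hf.sliceRegularOn_exp_smul isOpen_univ
  have hgb : IsBounded (range g) := by
    refine isBounded_iff_forall_norm_le.2 ⟨M, ?_⟩
    rintro _ ⟨q, rfl⟩
    calc ‖g q‖ = Real.exp (qinner q v) * ‖f q‖ := by simp [g, norm_smul]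
      _ ≤ Real.exp (qinner q v) * (M * Real.exp (-(qinner q v))) := by gcongr; exact hb q
      _ = M := by rw [Real.exp_neg]; field_simp
  refine ⟨g 0, fun q => ?_⟩
  rw [← hg.apply_eq_apply_of_isBounded hgb q 0]
  simp [g, smul_smul, ← Real.exp_add]

/-- Liouville-type theorem for `v`-slice regular functions. -/
theorem stmt13 (v : ℍ[ℝ]) (f : ℍ[ℝ] → ℍ[ℝ])
    (hf : VSliceRegularOn v f Set.univ)
    (M : ℝ) (hM : 0 < M)
    (hb : ∀ q : ℍ[ℝ], ‖f q‖ ≤ M * Real.exp (-(qinner q v))) :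
    ∃ k : ℍ[ℝ], ∀ q : ℍ[ℝ], f q = Real.exp (-(qinner q v)) • k :=
  stmt13_general v f hf M hb
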